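/- arXiv:1701.01759 — 3 statements merged into one kernel-verified Lean document; each statement's English description precedes it below -/
import Mathlib

section
/- Let z₀ < z₁ be real numbers, let ω : ℝ → ℝ be a polynomial function with ω(z₀) ≠ 0 and ω > 0 on (z₀, z₁), define f(z) = √((z₁ − z)(z − z₀)) · ω(z) for z ∈ (z₀, z₁), and let E > 0. Define S(z) = ( (1/2) ∫_{z₀}^{z} √(2E(1 + f'(t)²)) dt )². Then the derivative S'(z) tends to the nonzero limit E·(z₁ − z₀)·ω(z₀)²/2 as z → z₀⁺. -/
open Set MeasureTheory intervalIntegral Filter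

/-- Auxiliary function: `G t = (t - z₀) * 2E(1 + f'(t)^2)`, written without the
square root so that it is continuous at `z₀`. -/
noncomputable def auxG (z₀ z₁ E : ℝ) (ω : Polynomial ℝ) (t : ℝ) : ℝ :=
  2 * E * ((t - z₀) * (1 + ((z₁ + z₀ - 2*t) * ω.eval t) * ((Polynomial.derivative ω).eval t)
      + ((z₁ - t) * (t - z₀)) * ((Polynomial.derivative ω).eval t)^2)
    + ((z₁ + z₀ - 2*t) * ω.eval t)^2 / (4 * (z₁ - t)))

lemma auxG_contAt (z₀ z₁ E : ℝ) (ω : Polynomial ℝ) {t : ℝ} (ht : z₁ - t ≠ 0) :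
    ContinuousAt (auxG z₀ z₁ E ω) t := by
  unfold auxG
  have hA : ContinuousAt (fun s : ℝ => (z₁ + z₀ - 2*s) * ω.eval s) t :=
    (continuousAt_const.sub (continuousAt_const.mul continuousAt_id)).mul ω.continuousAt
  have hB : ContinuousAt (fun s : ℝ => (Polynomial.derivative ω).eval s) t :=
    (Polynomial.derivative ω).continuousAt
  have hu : ContinuousAt (fun s : ℝ => (z₁ - s) * (s - z₀)) t :=
    (continuousAt_const.sub continuousAt_id).mul (continuousAt_id.sub continuousAt_const)
  have hden : ContinuousAt (fun s : ℝ => 4 * (z₁ - s)) t :=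
    continuousAt_const.mul (continuousAt_const.sub continuousAt_id)
  have hdenne : (4 : ℝ) * (z₁ - t) ≠ 0 := mul_ne_zero (by norm_num) ht
  exact continuousAt_const.mul
    ((((continuousAt_id.sub continuousAt_const).mul
        ((continuousAt_const.add (hA.mul hB)).add (hu.mul (hB.pow 2)))).add
      (ContinuousAt.div (hA.pow 2) hden hdenne)))

lemma hasDeriv_prof (z₀ z₁ : ℝ) (ω : Polynomial ℝ) {t : ℝ} (ht : t ∈ Set.Ioo z₀ z₁) :
    HasDerivAt (fun s => Real.sqrt ((z₁ - s) * (s - z₀)) * ω.eval s)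
      ((z₁ + z₀ - 2*t) * ω.eval t / (2 * Real.sqrt ((z₁ - t) * (t - z₀)))
        + Real.sqrt ((z₁ - t) * (t - z₀)) * (Polynomial.derivative ω).eval t) t := by
  have hupos : 0 < (z₁ - t) * (t - z₀) :=
    mul_pos (sub_pos.mpr ht.2) (sub_pos.mpr ht.1)
  have hu : HasDerivAt (fun s : ℝ => (z₁ - s) * (s - z₀)) (z₁ + z₀ - 2*t) t := by
    have h1 : HasDerivAt (fun s : ℝ => (z₁ - s) * (s - z₀))
        ((0 - 1) * (t - z₀) + (z₁ - t) * (1 - 0)) t :=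
      ((hasDerivAt_const t z₁).sub (hasDerivAt_id t)).mul
        ((hasDerivAt_id t).sub (hasDerivAt_const t z₀))
    convert h1 using 1; ring
  have hsq : HasDerivAt (fun s : ℝ => Real.sqrt ((z₁ - s) * (s - z₀)))
      (1 / (2 * Real.sqrt ((z₁ - t) * (t - z₀))) * (z₁ + z₀ - 2*t)) t :=
    (Real.hasDerivAt_sqrt (ne_of_gt hupos)).comp t hu
  have hp : HasDerivAt (fun s : ℝ => ω.eval s) ((Polynomial.derivative ω).eval t) t :=
    ω.hasDerivAt t
  refine (hsq.mul hp).congr_deriv ?_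
  ring

set_option maxHeartbeats 2000000 in
/-- For the profile `f(z) = √((z₁-z)(z-z₀))·ω(z)` with `ω` polynomial,
`ω(z₀) ≠ 0`, `ω > 0` on `(z₀, z₁)`, the derivative of
`S(z) = ((1/2)∫_{z₀}^z √(2E(1+f'(t)²)) dt)²` tends to the nonzero limit
`E(z₁ - z₀)ω(z₀)²/2` as `z → z₀⁺`. -/
theorem stmt2 (z₀ z₁ : ℝ) (hz : z₀ < z₁) (ω : Polynomial ℝ)
    (hω₀ : ω.eval z₀ ≠ 0) (hωpos : ∀ z ∈ Ioo z₀ z₁, 0 < ω.eval z)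
    (E : ℝ) (hE : 0 < E)
    (f : ℝ → ℝ)
    (hf : ∀ z ∈ Ioo z₀ z₁, f z = Real.sqrt ((z₁ - z) * (z - z₀)) * ω.eval z)
    (S : ℝ → ℝ)
    (hS : ∀ z, S z
      = ((1 / 2) * ∫ t in z₀..z, Real.sqrt (2 * E * (1 + deriv f t ^ 2))) ^ 2) :
    E * (z₁ - z₀) * (ω.eval z₀) ^ 2 / 2 ≠ 0 ∧
    Tendsto (deriv S) (nhdsWithin z₀ (Ioi z₀))
      (nhds (E * (z₁ - z₀) * (ω.eval z₀) ^ 2 / 2)) := by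
  have hzz : (0:ℝ) < z₁ - z₀ := sub_pos.mpr hz
  have hω2 : 0 < ω.eval z₀ ^ 2 := sq_pos_of_ne_zero hω₀
  set L : ℝ := E * (z₁ - z₀) * ω.eval z₀ ^ 2 / 2 with hLdef
  have hL : 0 < L := by positivity
  refine ⟨ne_of_gt hL, ?_⟩
  set G : ℝ → ℝ := auxG z₀ z₁ E ω with hGdef
  set g : ℝ → ℝ := fun t => Real.sqrt (2 * E * (1 + deriv f t ^ 2)) with hgdef
  set ρ : ℝ → ℝ := fun t => (t - z₀) ^ (-(1/2) : ℝ) with hρdef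
  set F : ℝ → ℝ := fun z => ∫ t in z₀..z, g t with hFdef
  -- G at z₀
  have hGz₀ : G z₀ = L := by
    simp only [hGdef, auxG, hLdef]
    have : z₁ - z₀ ≠ 0 := ne_of_gt hzz
    field_simp
    ring
  -- derivative of f on Ioo
  have hd : ∀ t ∈ Ioo z₀ z₁, deriv f t
      = (z₁ + z₀ - 2*t) * ω.eval t / (2 * Real.sqrt ((z₁ - t) * (t - z₀)))
        + Real.sqrt ((z₁ - t) * (t - z₀)) * (Polynomial.derivative ω).eval t := by
    intro t ht
    have hev : f =ᶠ[nhds t] fun s => Real.sqrt ((z₁ - s) * (s - z₀)) * ω.eval s :=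
      Filter.eventuallyEq_of_mem (isOpen_Ioo.mem_nhds ht) hf
    rw [hev.deriv_eq]
    exact (hasDeriv_prof z₀ z₁ ω ht).deriv
  have hupos : ∀ t ∈ Ioo z₀ z₁, 0 < (z₁ - t) * (t - z₀) := fun t ht =>
    mul_pos (sub_pos.mpr ht.2) (sub_pos.mpr ht.1)
  -- key formula for g on Ioo
  have hkey : ∀ t ∈ Ioo z₀ z₁, g t = Real.sqrt (G t) / Real.sqrt (t - z₀) := by
    intro t ht
    have hu := hupos t ht
    have hs : Real.sqrt ((z₁ - t) * (t - z₀)) ≠ 0 := ne_of_gt (Real.sqrt_pos.mpr hu)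
    have hs2 : Real.sqrt ((z₁ - t) * (t - z₀)) ^ 2 = (z₁ - t) * (t - z₀) :=
      Real.sq_sqrt hu.le
    have ht1 : z₁ - t ≠ 0 := ne_of_gt (sub_pos.mpr ht.2)
    have ht0 : (0:ℝ) < t - z₀ := sub_pos.mpr ht.1
    have alg : ∀ A B s : ℝ, s ≠ 0 →
        (A / (2*s) + s*B)^2 = A^2 / (4*(s^2)) + A*B + s^2*B^2 := by
      intro A B s hsne
      field_simp
      ring
    have expand : ((z₁ + z₀ - 2*t) * ω.eval t / (2 * Real.sqrt ((z₁ - t) * (t - z₀)))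
          + Real.sqrt ((z₁ - t) * (t - z₀)) * (Polynomial.derivative ω).eval t) ^ 2
        = ((z₁ + z₀ - 2*t) * ω.eval t)^2 / (4 * ((z₁ - t) * (t - z₀)))
          + ((z₁ + z₀ - 2*t) * ω.eval t) * ((Polynomial.derivative ω).eval t)
          + ((z₁ - t) * (t - z₀)) * ((Polynomial.derivative ω).eval t)^2 := by
      rw [alg _ _ _ hs, hs2]
    have hGt : G t = (t - z₀) * (2 * E * (1 + deriv f t ^ 2)) := by
      rw [hd t ht, expand]
      simp only [hGdef, auxG]
      field_simp
      ring
    have hsq : Real.sqrt (G t) = Real.sqrt (t - z₀) * g t := by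
      rw [hGt, Real.sqrt_mul ht0.le]
    rw [hsq, mul_div_cancel_left₀ _ (ne_of_gt (Real.sqrt_pos.mpr ht0))]
  -- measurability
  have hgmeas : Measurable g := by
    have h1 : Continuous fun x : ℝ => Real.sqrt (2 * E * (1 + x ^ 2)) := by
      continuity
    exact h1.measurable.comp (measurable_deriv f)
  have hρnn : ∀ t, z₀ ≤ t → 0 ≤ ρ t := fun t ht =>
    Real.rpow_nonneg (by linarith) _
  have hρeq : ∀ t, z₀ < t → ρ t = (Real.sqrt (t - z₀))⁻¹ := by
    intro t ht
    simp only [hρdef]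
    rw [Real.rpow_neg (by linarith), Real.sqrt_eq_rpow]
  -- integrability of ρ
  have hρint : ∀ z : ℝ, IntervalIntegrable ρ volume z₀ z := by
    intro z
    have h1 : IntervalIntegrable (fun x : ℝ => x ^ (-(1/2) : ℝ)) volume (z₀ - z₀) (z - z₀) :=
      intervalIntegrable_rpow' (by norm_num)
    have h2 := h1.comp_sub_right z₀
    have h3 : z₀ - z₀ + z₀ = z₀ := by ring
    have h4 : z - z₀ + z₀ = z := by ring
    rw [h3, h4] at h2
    exact h2
  -- ∫ ρ = 2√(z - z₀)
  have hρval : ∀ z : ℝ, z₀ ≤ z → (∫ t in z₀..z, ρ t) = 2 * Real.sqrt (z - z₀) := by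
    intro z hz'
    have h1 : (∫ t in z₀..z, ρ t) = ∫ x in (z₀ - z₀)..(z - z₀), x ^ (-(1/2) : ℝ) :=
      intervalIntegral.integral_comp_sub_right (fun x => x ^ (-(1/2) : ℝ)) z₀
    rw [h1, sub_self]
    rw [integral_rpow (Or.inl (by norm_num))]
    rw [Real.zero_rpow (by norm_num)]
    rw [Real.sqrt_eq_rpow]
    norm_num
    ring
  -- integrability of g and of √G * ρ
  have hbound : ∀ z ∈ Ioo z₀ z₁, ∃ M : ℝ, 0 ≤ M ∧
      ∀ t ∈ Icc z₀ z, Real.sqrt (G t) ≤ M := by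
    intro z hzI
    have hcont : ContinuousOn (fun t => Real.sqrt (G t)) (Icc z₀ z) := by
      intro t ht
      have ht1 : z₁ - t ≠ 0 := by
        have : t < z₁ := lt_of_le_of_lt ht.2 hzI.2
        exact ne_of_gt (sub_pos.mpr this)
      exact (Real.continuous_sqrt.continuousAt.comp (auxG_contAt z₀ z₁ E ω ht1)).continuousWithinAt
    obtain ⟨C, hC⟩ := isCompact_Icc.exists_bound_of_continuousOn hcont
    refine ⟨max C 0, le_max_right _ _, fun t ht => ?_⟩
    have := hC t ht
    rw [Real.norm_eq_abs, abs_of_nonneg (Real.sqrt_nonneg _)] at this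
    exact le_trans this (le_max_left _ _)
  have hgint : ∀ z ∈ Ioo z₀ z₁, IntervalIntegrable g volume z₀ z := by
    intro z hzI
    obtain ⟨M, hM0, hM⟩ := hbound z hzI
    refine ((hρint z).const_mul M).mono_fun hgmeas.aestronglyMeasurable ?_
    refine Filter.eventually_of_mem (self_mem_ae_restrict measurableSet_uIoc) ?_
    intro x hx
    rw [uIoc_of_le hzI.1.le] at hx
    have hxI : x ∈ Ioo z₀ z₁ := ⟨hx.1, lt_of_le_of_lt hx.2 hzI.2⟩
    have hx0 : (0:ℝ) < x - z₀ := sub_pos.mpr hx.1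
    show ‖g x‖ ≤ ‖M * ρ x‖
    rw [hkey x hxI, hρeq x hx.1, Real.norm_eq_abs, Real.norm_eq_abs,
      abs_of_nonneg (div_nonneg (Real.sqrt_nonneg _) (Real.sqrt_nonneg _)),
      abs_of_nonneg (mul_nonneg hM0 (inv_nonneg.mpr (Real.sqrt_nonneg _))), div_eq_mul_inv]
    exact mul_le_mul_of_nonneg_right (hM x ⟨hx.1.le, hx.2⟩) (inv_nonneg.mpr (Real.sqrt_nonneg _))
  have hhint : ∀ z ∈ Ioo z₀ z₁, IntervalIntegrable (fun t => Real.sqrt (G t) * ρ t) volume z₀ z := by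
    intro z hzI
    obtain ⟨M, hM0, hM⟩ := hbound z hzI
    have hGmeas : Measurable G := by
      rw [hGdef]; unfold auxG
      have hpm : ∀ p : Polynomial ℝ, Measurable fun s : ℝ => p.eval s :=
        fun p => p.continuous.measurable
      have hA : Measurable fun s : ℝ => (z₁ + z₀ - 2*s) * ω.eval s :=
        (measurable_const.sub (measurable_const.mul measurable_id)).mul (hpm ω)
      have hB := hpm (Polynomial.derivative ω)
      have hu : Measurable fun s : ℝ => (z₁ - s) * (s - z₀) :=
        (measurable_const.sub measurable_id).mul (measurable_id.sub measurable_const)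
      exact measurable_const.mul
        (((measurable_id.sub measurable_const).mul
            ((measurable_const.add (hA.mul hB)).add (hu.mul (hB.pow_const 2)))).add
          ((hA.pow_const 2).div (measurable_const.mul (measurable_const.sub measurable_id))))
    have hρmeas : Measurable ρ := by
      rw [hρdef]
      fun_prop
    have hmeasG : Measurable fun t => Real.sqrt (G t) * ρ t :=
      (Real.continuous_sqrt.measurable.comp hGmeas).mul hρmeas
    refine ((hρint z).const_mul M).mono_fun hmeasG.aestronglyMeasurable ?_
    refine Filter.eventually_of_mem (self_mem_ae_restrict measurableSet_uIoc) ?_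
    intro x hx
    rw [uIoc_of_le hzI.1.le] at hx
    show ‖Real.sqrt (G x) * ρ x‖ ≤ ‖M * ρ x‖
    rw [Real.norm_eq_abs, Real.norm_eq_abs, abs_of_nonneg (mul_nonneg (Real.sqrt_nonneg _) (hρnn x hx.1.le)),
      abs_of_nonneg (mul_nonneg hM0 (hρnn x hx.1.le))]
    exact mul_le_mul_of_nonneg_right (hM x ⟨hx.1.le, hx.2⟩) (hρnn x hx.1.le)
  -- F as an integral of √G * ρ
  have hFeq : ∀ z ∈ Ioo z₀ z₁, F z = ∫ t in z₀..z, Real.sqrt (G t) * ρ t := by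
    intro z hzI
    apply intervalIntegral.integral_congr_ae
    apply Filter.Eventually.of_forall
    intro x hx
    rw [uIoc_of_le hzI.1.le] at hx
    have hxI : x ∈ Ioo z₀ z₁ := ⟨hx.1, lt_of_le_of_lt hx.2 hzI.2⟩
    rw [hkey x hxI, hρeq x hx.1, div_eq_mul_inv]
  -- squeeze for F
  have hFsq : ∀ ε : ℝ, 0 < ε → ∃ δ : ℝ, 0 < δ ∧ δ ≤ z₁ - z₀ ∧
      ∀ z ∈ Ioo z₀ (z₀ + δ),
        (Real.sqrt L - ε) * (2 * Real.sqrt (z - z₀)) ≤ F z ∧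
        F z ≤ (Real.sqrt L + ε) * (2 * Real.sqrt (z - z₀)) := by
    intro ε hε
    have hGc : ContinuousAt (fun t => Real.sqrt (G t)) z₀ :=
      Real.continuous_sqrt.continuousAt.comp (auxG_contAt z₀ z₁ E ω (ne_of_gt hzz))
    rw [Metric.continuousAt_iff] at hGc
    obtain ⟨δ₀, hδ₀, hδ⟩ := hGc ε hε
    refine ⟨min δ₀ (z₁ - z₀), lt_min hδ₀ hzz, min_le_right _ _, ?_⟩
    intro z hzI
    have hz₁ : z < z₁ := by
      have := hzI.2
      have := min_le_right δ₀ (z₁ - z₀)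
      linarith
    have hzIoo : z ∈ Ioo z₀ z₁ := ⟨hzI.1, hz₁⟩
    have hsqG : ∀ t ∈ Icc z₀ z,
        Real.sqrt L - ε ≤ Real.sqrt (G t) ∧ Real.sqrt (G t) ≤ Real.sqrt L + ε := by
      intro t ht
      have hdist : dist t z₀ < δ₀ := by
        rw [Real.dist_eq, abs_of_nonneg (by linarith [ht.1] : (0:ℝ) ≤ t - z₀)]
        have := min_le_left δ₀ (z₁ - z₀)
        have := hzI.2
        have := ht.2
        linarith
      have := hδ hdist
      rw [Real.dist_eq] at this
      rw [← hGz₀]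
      constructor <;> [linarith [abs_lt.mp this]; linarith [abs_lt.mp this]]
    rw [hFeq z hzIoo]
    constructor
    · rw [← hρval z hzIoo.1.le]
      rw [← intervalIntegral.integral_const_mul]
      apply intervalIntegral.integral_mono_on hzIoo.1.le ((hρint z).const_mul _) (hhint z hzIoo)
      intro t ht
      exact mul_le_mul_of_nonneg_right (hsqG t ht).1 (hρnn t ht.1)
    · rw [← hρval z hzIoo.1.le]
      rw [← intervalIntegral.integral_const_mul]
      apply intervalIntegral.integral_mono_on hzIoo.1.le (hhint z hzIoo) ((hρint z).const_mul _)
      intro t ht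
      exact mul_le_mul_of_nonneg_right (hsqG t ht).2 (hρnn t ht.1)
  -- derivative of S on Ioo
  have hSfun : S = fun w => ((1/2 : ℝ) * F w) ^ 2 := by
    funext w
    rw [hS w]
  have hdS : ∀ z ∈ Ioo z₀ z₁, deriv S z = F z * g z / 2 := by
    intro z hzI
    have hz1 : z₁ - z ≠ 0 := ne_of_gt (sub_pos.mpr hzI.2)
    have hz0 : (0:ℝ) < z - z₀ := sub_pos.mpr hzI.1
    have hgc : ContinuousAt g z := by
      have hc : ContinuousAt (fun t => Real.sqrt (G t) / Real.sqrt (t - z₀)) z := by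
        apply ContinuousAt.div
        · exact Real.continuous_sqrt.continuousAt.comp (auxG_contAt z₀ z₁ E ω hz1)
        · exact Real.continuous_sqrt.continuousAt.comp (continuousAt_id.sub continuousAt_const)
        · exact ne_of_gt (Real.sqrt_pos.mpr hz0)
      apply hc.congr
      exact Filter.eventuallyEq_of_mem (isOpen_Ioo.mem_nhds hzI) (fun t ht => (hkey t ht).symm)
    have hFD : HasDerivAt F (g z) z :=
      intervalIntegral.integral_hasDerivAt_right (hgint z hzI)
        ⟨Set.univ, Filter.univ_mem, hgmeas.aestronglyMeasurable⟩ hgc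
    have hSD : HasDerivAt S ((2:ℕ) * ((1/2 : ℝ) * F z) ^ (2-1) * ((1/2 : ℝ) * g z)) z := by
      rw [hSfun]
      exact (hFD.const_mul ((1:ℝ)/2)).pow 2
    rw [hSD.deriv]
    push_cast
    ring
  -- eventual formula for deriv S
  have hIooMem : Ioo z₀ z₁ ∈ nhdsWithin z₀ (Ioi z₀) :=
    Ioo_mem_nhdsGT_of_mem ⟨le_refl z₀, hz⟩
  have hδS : (fun z => (F z / (2 * Real.sqrt (z - z₀))) * Real.sqrt (G z))
      =ᶠ[nhdsWithin z₀ (Ioi z₀)] deriv S := by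
    refine Filter.eventuallyEq_of_mem hIooMem ?_
    intro z hzI
    have hz0 : (0:ℝ) < z - z₀ := sub_pos.mpr hzI.1
    have hsne : Real.sqrt (z - z₀) ≠ 0 := ne_of_gt (Real.sqrt_pos.mpr hz0)
    rw [hdS z hzI, hkey z hzI]
    field_simp
  clear_value F G g ρ
  -- the two limits
  have h1 : Tendsto (fun z => F z / (2 * Real.sqrt (z - z₀))) (nhdsWithin z₀ (Ioi z₀))
      (nhds (Real.sqrt L)) := by
    rw [Metric.tendsto_nhdsWithin_nhds]
    intro ε hε
    obtain ⟨δ, hδpos, hδle, hb⟩ := hFsq (ε/2) (half_pos hε)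
    refine ⟨δ, hδpos, fun x hx hdx => ?_⟩
    have hx0 : (0:ℝ) < x - z₀ := sub_pos.mpr hx
    have hxI : x ∈ Ioo z₀ (z₀ + δ) := by
      constructor
      · exact hx
      · rw [Real.dist_eq, abs_of_pos hx0] at hdx
        linarith
    obtain ⟨hlo, hhi⟩ := hb x hxI
    have hc : (0:ℝ) < 2 * Real.sqrt (x - z₀) :=
      mul_pos two_pos (Real.sqrt_pos.mpr hx0)
    rw [Real.dist_eq]
    have h1 : F x / (2 * Real.sqrt (x - z₀)) ≤ Real.sqrt L + ε/2 :=
      (div_le_iff₀ hc).mpr (by linarith)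
    have h2 : Real.sqrt L - ε/2 ≤ F x / (2 * Real.sqrt (x - z₀)) :=
      (le_div_iff₀ hc).mpr (by linarith)
    rw [abs_lt]
    constructor <;> linarith
  have h2 : Tendsto (fun z => Real.sqrt (G z)) (nhdsWithin z₀ (Ioi z₀))
      (nhds (Real.sqrt L)) := by
    have hGc : ContinuousAt (fun t => Real.sqrt (G t)) z₀ := by
      rw [hGdef]
      exact Real.continuous_sqrt.continuousAt.comp (auxG_contAt z₀ z₁ E ω (ne_of_gt hzz))
    have := hGc.continuousWithinAt (s := Ioi z₀)
    rw [ContinuousWithinAt, hGz₀] at this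
    exact this
  have h3 := h1.mul h2
  rw [Real.mul_self_sqrt hL.le] at h3
  exact h3.congr' hδS
end

section
/- Let z₀ < z₁ be real numbers and let ω : ℝ → ℝ be a polynomial function with ω > 0 on (z₀, z₁) and ω(z₀) ≠ 0, ω(z₁) ≠ 0; define f(z) = √((z₁ − z)(z − z₀)) · ω(z) for z ∈ (z₀, z₁). Then the function z ↦ √(1 + f'(z)²) is interval-integrable on [z₀, z₁]; in particular, for every E > 0 the action integral ∫_{z₀}^{z₁} √(2E(1 + f'(z)²)) dz is finite. -/
/-!
On `(z₀, z₁)` write `q = (z₁ - z)(z - z₀)`. Differentiating `f = √q · ω` gives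
`f' = N / (2√q)` with `N = q'ω + 2qω'` continuous on `[z₀, z₁]`, so
`√(1 + f'²) = √(4q + N²) / (2√q) ≤ C / √q`. Since `q = uv` with `u + v = z₁ - z₀`,
`1/√q ≤ (1/√u + 1/√v) / √(z₁ - z₀)`, a sum of two integrable inverse square-root
singularities at the endpoints.
-/

open Set MeasureTheory intervalIntegral

namespace Real

/-- For `x < 0` both sides vanish: the negative-base `rpow` carries the factor
`cos (-π/2) = 0`. -/
theorem inv_sqrt_eq_rpow_neg_half (x : ℝ) : (√x)⁻¹ = x ^ (-(1 / 2) : ℝ) := by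
  rcases le_or_gt 0 x with hx | hx
  · rw [rpow_neg hx, ← sqrt_eq_rpow]
  · rw [sqrt_eq_zero_of_nonpos hx.le, inv_zero, rpow_def_of_neg hx,
      show (-(1 / 2) : ℝ) * π = -(π / 2) by ring, cos_neg, cos_pi_div_two, mul_zero]

theorem intervalIntegrable_inv_sqrt (a b : ℝ) :
    IntervalIntegrable (fun x => (√x)⁻¹) volume a b := by
  simpa only [inv_sqrt_eq_rpow_neg_half] using intervalIntegrable_rpow' (by norm_num)

theorem sqrt_add_le_add_sqrt {u v : ℝ} (hu : 0 ≤ u) (hv : 0 ≤ v) : √(u + v) ≤ √u + √v := by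
  rw [sqrt_le_left (by positivity), add_sq, sq_sqrt hu, sq_sqrt hv]
  nlinarith [mul_nonneg (sqrt_nonneg u) (sqrt_nonneg v)]

theorem inv_sqrt_mul_le {u v : ℝ} (hu : 0 < u) (hv : 0 < v) :
    (√(u * v))⁻¹ ≤ (√(u + v))⁻¹ * ((√u)⁻¹ + (√v)⁻¹) := by
  have hsu := sqrt_pos.2 hu
  have hsv := sqrt_pos.2 hv
  rw [sqrt_mul hu.le, inv_add_inv hsu.ne' hsv.ne', ← div_eq_inv_mul,
    le_div_iff₀ (sqrt_pos.2 (add_pos hu hv)), ← div_eq_inv_mul]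
  gcongr
  exact sqrt_add_le_add_sqrt hu.le hv.le

end Real

theorem IntervalIntegrable.of_norm_le_of_mem_Ioo {f g : ℝ → ℝ} {a b : ℝ} (hab : a ≤ b)
    (hg : IntervalIntegrable g volume a b) (hf : AEStronglyMeasurable f volume)
    (hle : ∀ z ∈ Ioo a b, ‖f z‖ ≤ g z) : IntervalIntegrable f volume a b := by
  refine hg.mono_fun' hf.restrict ?_
  rw [uIoc_of_le hab, Measure.restrict_congr_set Ioo_ae_eq_Ioc.symm]
  exact ae_restrict_of_forall_mem measurableSet_Ioo hle

theorem intervalIntegrable_inv_sqrt_mul_sub {a b : ℝ} (hab : a ≤ b) :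
    IntervalIntegrable (fun z => (√((b - z) * (z - a)))⁻¹) volume a b := by
  have hleft : IntervalIntegrable (fun z => (√(z - a))⁻¹) volume a b := by
    simpa using (Real.intervalIntegrable_inv_sqrt 0 (b - a)).comp_sub_right a
  have hright : IntervalIntegrable (fun z => (√(b - z))⁻¹) volume a b := by
    simpa using ((Real.intervalIntegrable_inv_sqrt 0 (b - a)).comp_sub_left b).symm
  refine ((hleft.add hright).const_mul (√(b - a))⁻¹).of_norm_le_of_mem_Ioo hab
    (by fun_prop) fun z hz => ?_
  rw [Real.norm_of_nonneg (by positivity)]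
  simpa [add_comm] using Real.inv_sqrt_mul_le (sub_pos.2 hz.2) (sub_pos.2 hz.1)

theorem hasDerivAt_sqrt_mul_sub_mul {a b z ω' : ℝ} {ω : ℝ → ℝ} (hz : z ∈ Ioo a b)
    (hω : HasDerivAt ω ω' z) :
    HasDerivAt (fun y => √((b - y) * (y - a)) * ω y)
      (((a + b - 2 * z) * ω z + 2 * ((b - z) * (z - a)) * ω') / (2 * √((b - z) * (z - a))))
      z := by
  have hq : 0 < (b - z) * (z - a) := mul_pos (sub_pos.2 hz.2) (sub_pos.2 hz.1)
  have hqd : HasDerivAt (fun y => (b - y) * (y - a)) (a + b - 2 * z) z :=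
    (((hasDerivAt_id' z).const_sub b).mul ((hasDerivAt_id' z).sub_const a)).congr_deriv
      (by ring)
  refine ((hqd.sqrt hq.ne').mul hω).congr_deriv ?_
  have hs : √((b - z) * (z - a)) ≠ 0 := (Real.sqrt_pos.2 hq).ne'
  field_simp
  rw [Real.sq_sqrt hq.le]
  ring

theorem exists_sqrt_one_add_deriv_sq_le_mul_inv_sqrt {a b : ℝ} {ω f : ℝ → ℝ}
    (hω : ContDiff ℝ 1 ω)
    (hf : ∀ z ∈ Ioo a b, f z = √((b - z) * (z - a)) * ω z) :
    ∃ C, ∀ z ∈ Ioo a b, √(1 + deriv f z ^ 2) ≤ C * (√((b - z) * (z - a)))⁻¹ := by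
  obtain ⟨hωd, hω'c⟩ := contDiff_one_iff_deriv.1 hω
  set N : ℝ → ℝ := fun z => (a + b - 2 * z) * ω z + 2 * ((b - z) * (z - a)) * deriv ω z
  have hG : Continuous fun z => √(4 * ((b - z) * (z - a)) + N z ^ 2) := by fun_prop
  obtain ⟨C, hC⟩ :=
    (isCompact_Icc (a := a) (b := b)).exists_bound_of_continuousOn hG.continuousOn
  refine ⟨C / 2, fun z hz => ?_⟩
  set q := (b - z) * (z - a)
  have hq : 0 < q := mul_pos (sub_pos.2 hz.2) (sub_pos.2 hz.1)
  have hderiv : deriv f z = N z / (2 * √q) :=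
    ((hasDerivAt_sqrt_mul_sub_mul hz (hωd z).hasDerivAt).congr_of_eventuallyEq
      (Filter.eventuallyEq_of_mem (Ioo_mem_nhds hz.1 hz.2) hf)).deriv
  have hsq : 1 + deriv f z ^ 2 = (√(4 * q + N z ^ 2) / (2 * √q)) ^ 2 := by
    rw [hderiv, div_pow, div_pow, Real.sq_sqrt (by positivity), mul_pow, Real.sq_sqrt hq.le]
    field_simp
    ring
  rw [hsq, Real.sqrt_sq (by positivity), show C / 2 * (√q)⁻¹ = C / (2 * √q) by ring]
  gcongr
  simpa [Real.norm_eq_abs, abs_of_nonneg (Real.sqrt_nonneg _)] using hC z (Ioo_subset_Icc_self hz)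

theorem stmt6_general (z₀ z₁ : ℝ) (hz : z₀ < z₁) (ω : Polynomial ℝ)
    (f : ℝ → ℝ)
    (hf : ∀ z ∈ Ioo z₀ z₁, f z = Real.sqrt ((z₁ - z) * (z - z₀)) * ω.eval z) :
    IntervalIntegrable (fun z => Real.sqrt (1 + deriv f z ^ 2)) volume z₀ z₁ ∧
    ∀ E : ℝ, 0 < E →
      IntervalIntegrable (fun z => Real.sqrt (2 * E * (1 + deriv f z ^ 2)))
        volume z₀ z₁ := by
  have hω : ContDiff ℝ 1 fun z => ω.eval z := by
    simpa using ω.contDiff_aeval (𝕜 := ℝ) 1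
  obtain ⟨C, hC⟩ := exists_sqrt_one_add_deriv_sq_le_mul_inv_sqrt hω hf
  have hlength : IntervalIntegrable (fun z => √(1 + deriv f z ^ 2)) volume z₀ z₁ :=
    ((intervalIntegrable_inv_sqrt_mul_sub hz.le).const_mul C).of_norm_le_of_mem_Ioo hz.le
      (by fun_prop) fun z hz => by
        rw [Real.norm_of_nonneg (Real.sqrt_nonneg _)]
        exact hC z hz
  refine ⟨hlength, fun E hE => ?_⟩
  simpa only [Real.sqrt_mul (by positivity : (0 : ℝ) ≤ 2 * E)] using
    hlength.const_mul √(2 * E)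

/-- For the profile `f(z) = √((z₁-z)(z-z₀))·ω(z)` with `ω` polynomial,
positive on `(z₀, z₁)` and nonvanishing at the endpoints, the function
`√(1 + f'²)` is interval-integrable on `[z₀, z₁]`; in particular the action
integral `∫ √(2E(1 + f'²))` is finite for every `E > 0`. -/
theorem stmt6 (z₀ z₁ : ℝ) (hz : z₀ < z₁) (ω : Polynomial ℝ)
    (hωpos : ∀ z ∈ Ioo z₀ z₁, 0 < ω.eval z)
    (hω₀ : ω.eval z₀ ≠ 0) (hω₁ : ω.eval z₁ ≠ 0)
    (f : ℝ → ℝ)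
    (hf : ∀ z ∈ Ioo z₀ z₁, f z = Real.sqrt ((z₁ - z) * (z - z₀)) * ω.eval z) :
    IntervalIntegrable (fun z => Real.sqrt (1 + deriv f z ^ 2)) volume z₀ z₁ ∧
    ∀ E : ℝ, 0 < E →
      IntervalIntegrable (fun z => Real.sqrt (2 * E * (1 + deriv f z ^ 2)))
        volume z₀ z₁ :=
  stmt6_general z₀ z₁ hz ω f hf
end

section
/- Let z₀ < z₁ be real numbers and let ω : ℝ → ℝ be a polynomial function with ω > 0 on (z₀, z₁) and ω(z₀) ≠ 0; define f(z) = √((z₁ − z)(z − z₀)) · ω(z) for z ∈ (z₀, z₁). Then the meridian arc length from the pole, A(z) = ∫_{z₀}^{z} √(1 + f'(t)²) dt, satisfies lim_{z→z₀⁺} A(z)/√(z − z₀) = √(z₁ − z₀) · |ω(z₀)|. -/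
/-!
Near `z₀` the profile factors as `f z = √(z - z₀) * g z` with `g z = √(z₁ - z) * ω z` smooth at
`z₀`, so `√(z - z₀) * f' z → g z₀ / 2`. Hence the arc-length integrand behaves like
`|g z₀| / (2 * √(z - z₀))`: it is integrable at `z₀`, and L'Hôpital's rule applied to
`A z / √(z - z₀)` gives the limit `|g z₀| = √(z₁ - z₀) * |ω z₀|`.
-/

open Set MeasureTheory intervalIntegral Filter Topology Real

theorem integrableOn_Ioo_of_abs_sqrt_sub_mul_le {G : ℝ → ℝ} {a b M : ℝ}
    (hG : ContinuousOn G (Ioo a b)) (hM : ∀ x ∈ Ioo a b, |√(x - a) * G x| ≤ M) :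
    IntegrableOn G (Ioo a b) := by
  rcases le_or_gt b a with hba | hab
  · simp [Ioo_eq_empty hba.not_gt]
  have hpow : IntegrableOn (fun x => M * (x - a) ^ (-(1 / 2) : ℝ)) (Ioo a b) := by
    have h := (intervalIntegrable_rpow' (a := 0) (b := b - a)
      (by norm_num : (-1 : ℝ) < -(1 / 2))).comp_sub_right a
    rw [zero_add, sub_add_cancel, intervalIntegrable_iff_integrableOn_Ioo_of_le hab.le] at h
    exact h.const_mul M
  refine hpow.mono' (hG.aestronglyMeasurable measurableSet_Ioo)
    (ae_restrict_of_forall_mem measurableSet_Ioo fun x hx => ?_)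
  have hs : 0 < √(x - a) := sqrt_pos.mpr (sub_pos.mpr hx.1)
  rw [Real.norm_eq_abs, rpow_neg (sub_pos.mpr hx.1).le, ← sqrt_eq_rpow, ← div_eq_mul_inv,
    le_div_iff₀ hs, mul_comm, ← abs_of_pos hs, ← abs_mul]
  exact hM x hx

theorem tendsto_integral_div_sqrt_sub {G : ℝ → ℝ} {a b c : ℝ} (hab : a < b)
    (hG : ContinuousOn G (Ioo a b))
    (hlim : Tendsto (fun x => √(x - a) * G x) (𝓝[>] a) (𝓝 c)) :
    Tendsto (fun z => (∫ t in a..z, G t) / √(z - a)) (𝓝[>] a) (𝓝 (2 * c)) := by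
  obtain ⟨b', hab', hsub⟩ : ∃ b' > a, Ioo a b' ⊆ {x | |√(x - a) * G x| < |c| + 1} ∩ Ioo a b :=
    mem_nhdsGT_iff_exists_Ioo_subset.mp <|
      inter_mem (hlim.abs.eventually (gt_mem_nhds (lt_add_one |c|))) (Ioo_mem_nhdsGT hab)
  have hG' : ContinuousOn G (Ioo a b') := hG.mono fun x hx => (hsub hx).2
  have hint : IntegrableOn G (Ioo a b') :=
    integrableOn_Ioo_of_abs_sqrt_sub_mul_le hG' fun x hx => (hsub hx).1.le
  have hprim : ∀ x ∈ Ioo a b', HasDerivAt (fun z => ∫ t in a..z, G t) (G x) x := fun x hx =>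
    integral_hasDerivAt_right
      ((intervalIntegrable_iff_integrableOn_Ioo_of_le hx.1.le).mpr
        (hint.mono_set (Ioo_subset_Ioo_right hx.2.le)))
      (hG'.stronglyMeasurableAtFilter isOpen_Ioo x hx) (hG'.continuousAt (Ioo_mem_nhds hx.1 hx.2))
  have hsqrt : ∀ x ∈ Ioo a b', HasDerivAt (fun z => √(z - a)) (1 / (2 * √(x - a))) x :=
    fun x hx => ((hasDerivAt_id x).sub_const a).sqrt (sub_pos.mpr hx.1).ne'
  have hprim_zero : Tendsto (fun z => ∫ t in a..z, G t) (𝓝[>] a) (𝓝 0) := by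
    have h := continuousWithinAt_primitive (b₀ := a) (b₁ := a) (b₂ := b') (a := a)
      (μ := volume) (f := G) Real.volume_singleton (by
        rw [min_self, max_eq_right hab'.le, intervalIntegrable_iff_integrableOn_Ioo_of_le hab'.le]
        exact hint)
    rw [ContinuousWithinAt, integral_same] at h
    rw [← nhdsWithin_Ioo_eq_nhdsGT hab']
    exact h.mono_left (nhdsWithin_mono a Ioo_subset_Icc_self)
  have hsqrt_zero : Tendsto (fun z => √(z - a)) (𝓝[>] a) (𝓝 0) :=
    ((continuous_sqrt.comp (continuous_sub_right a)).tendsto' a 0 (by simp)).mono_left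
      nhdsWithin_le_nhds
  refine HasDerivAt.lhopital_zero_right_on_Ioo hab' hprim hsqrt
    (fun x hx => by have := sqrt_pos.mpr (sub_pos.mpr hx.1); positivity)
    hprim_zero hsqrt_zero ((hlim.const_mul 2).congr fun x => ?_)
  rw [div_div_eq_mul_div, div_one]
  ring

theorem tendsto_sqrt_sub_mul_sqrt_one_add_sq {u : ℝ → ℝ} {a ℓ : ℝ}
    (h : Tendsto (fun x => √(x - a) * u x) (𝓝[>] a) (𝓝 ℓ)) :
    Tendsto (fun x => √(x - a) * √(1 + u x ^ 2)) (𝓝[>] a) (𝓝 |ℓ|) := by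
  have hsub : Tendsto (fun x => x - a) (𝓝[>] a) (𝓝 0) :=
    ((continuous_sub_right a).tendsto' a 0 (sub_self a)).mono_left nhdsWithin_le_nhds
  have hsum := (hsub.add (h.pow 2)).sqrt
  rw [zero_add, sqrt_sq_eq_abs] at hsum
  refine hsum.congr' (eventually_mem_nhdsWithin.mono fun x (hx : a < x) => ?_)
  show _ = √(x - a) * √(1 + u x ^ 2)
  rw [← sqrt_mul (sub_pos.mpr hx).le, mul_pow, sq_sqrt (sub_pos.mpr hx).le]
  ring_nf

section SqrtMul

variable {f g : ℝ → ℝ} {a : ℝ} {U : Set ℝ}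

theorem hasDerivAt_sqrt_sub_mul {x : ℝ} (hx : a < x) (hg : DifferentiableAt ℝ g x) :
    HasDerivAt (fun y => √(y - a) * g y) (g x / (2 * √(x - a)) + √(x - a) * deriv g x) x :=
  ((((hasDerivAt_id' x).sub_const a).sqrt (sub_pos.mpr hx).ne').mul hg.hasDerivAt).congr_deriv
    (by ring)

variable (hU : IsOpen U) (hg : ContDiffOn ℝ 1 g U) (hf : ∀ x ∈ Ioi a ∩ U, f x = √(x - a) * g x)
include hU hg hf

theorem deriv_eq_of_eq_sqrt_sub_mul {x : ℝ} (hx : x ∈ Ioi a ∩ U) :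
    deriv f x = g x / (2 * √(x - a)) + √(x - a) * deriv g x :=
  ((hasDerivAt_sqrt_sub_mul hx.1
    (hg.differentiableOn one_ne_zero |>.differentiableAt (hU.mem_nhds hx.2))).congr_of_eventuallyEq
    (eventually_of_mem ((isOpen_Ioi.inter hU).mem_nhds hx) hf)).deriv

theorem continuousOn_deriv_of_eq_sqrt_sub_mul : ContinuousOn (deriv f) (Ioi a ∩ U) := by
  have hgc : ContinuousOn g (Ioi a ∩ U) := hg.continuousOn.mono inter_subset_right
  have hg'c : ContinuousOn (deriv g) (Ioi a ∩ U) :=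
    (hg.continuousOn_deriv_of_isOpen hU le_rfl).mono inter_subset_right
  have hsc : ContinuousOn (fun x => √(x - a)) (Ioi a ∩ U) := by fun_prop
  refine ((hgc.div (continuousOn_const.mul hsc) fun x hx => ?_).add (hsc.mul hg'c)).congr
    fun x hx => deriv_eq_of_eq_sqrt_sub_mul hU hg hf hx
  exact mul_ne_zero two_ne_zero (sqrt_pos.mpr (sub_pos.mpr hx.1)).ne'

theorem tendsto_sqrt_sub_mul_deriv_of_eq_sqrt_sub_mul (ha : a ∈ U) :
    Tendsto (fun x => √(x - a) * deriv f x) (𝓝[>] a) (𝓝 (g a / 2)) := by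
  have hcont : ContinuousAt (fun x => g x / 2 + (x - a) * deriv g x) a :=
    ((hg.continuousOn.continuousAt (hU.mem_nhds ha)).div_const 2).add
      ((continuous_sub_right a).continuousAt.mul
        ((hg.continuousOn_deriv_of_isOpen hU le_rfl).continuousAt (hU.mem_nhds ha)))
  have hlim := hcont.tendsto.mono_left (nhdsWithin_le_nhds (s := Ioi a))
  rw [sub_self, zero_mul, add_zero] at hlim
  refine hlim.congr' ?_
  filter_upwards [inter_mem_nhdsWithin (Ioi a) (hU.mem_nhds ha)] with x hx
  have hs := sqrt_pos.mpr (sub_pos.mpr hx.1)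
  rw [deriv_eq_of_eq_sqrt_sub_mul hU hg hf hx, mul_add, ← mul_assoc,
    mul_self_sqrt (sub_pos.mpr hx.1).le]
  field_simp

end SqrtMul

theorem stmt7_general (z₀ z₁ : ℝ) (hz : z₀ < z₁) (ω : Polynomial ℝ)
    (f : ℝ → ℝ)
    (hf : ∀ z ∈ Ioo z₀ z₁, f z = Real.sqrt ((z₁ - z) * (z - z₀)) * ω.eval z)
    (A : ℝ → ℝ)
    (hA : ∀ z, A z = ∫ t in z₀..z, Real.sqrt (1 + deriv f t ^ 2)) :
    Tendsto (fun z => A z / Real.sqrt (z - z₀)) (nhdsWithin z₀ (Ioi z₀))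
      (nhds (Real.sqrt (z₁ - z₀) * |ω.eval z₀|)) := by
  set g : ℝ → ℝ := fun x => √(z₁ - x) * ω.eval x
  have hg : ContDiffOn ℝ 1 g (Iio z₁) :=
    ((contDiffOn_const.sub contDiffOn_id).sqrt fun x hx => (sub_pos.mpr hx).ne').mul
      (ω.contDiff_aeval 1).contDiffOn
  have hfg : ∀ x ∈ Ioi z₀ ∩ Iio z₁, f x = √(x - z₀) * g x := fun x hx => by
    rw [Ioi_inter_Iio] at hx
    rw [hf x hx, sqrt_mul' _ (sub_pos.mpr hx.1).le]
    ring
  have hderiv_cont := continuousOn_deriv_of_eq_sqrt_sub_mul isOpen_Iio hg hfg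
  rw [Ioi_inter_Iio] at hderiv_cont
  have hlim : Tendsto (fun z => (∫ t in z₀..z, √(1 + deriv f t ^ 2)) / √(z - z₀)) (𝓝[>] z₀)
      (𝓝 (2 * |g z₀ / 2|)) :=
    tendsto_integral_div_sqrt_sub hz (continuousOn_const.add (hderiv_cont.pow 2)).sqrt
      (tendsto_sqrt_sub_mul_sqrt_one_add_sq
        (tendsto_sqrt_sub_mul_deriv_of_eq_sqrt_sub_mul isOpen_Iio hg hfg hz))
  have hval : 2 * |g z₀ / 2| = √(z₁ - z₀) * |ω.eval z₀| := by
    rw [abs_div, abs_two, abs_mul, abs_of_nonneg (sqrt_nonneg _)]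
    ring
  simpa only [hA, hval] using hlim

/-- For the profile `f(z) = √((z₁-z)(z-z₀))·ω(z)`, the meridian arc length
`A(z) = ∫_{z₀}^z √(1 + f'(t)²) dt` satisfies
`A(z)/√(z - z₀) → √(z₁ - z₀)·|ω(z₀)|` as `z → z₀⁺`. -/
theorem stmt7 (z₀ z₁ : ℝ) (hz : z₀ < z₁) (ω : Polynomial ℝ)
    (hωpos : ∀ z ∈ Ioo z₀ z₁, 0 < ω.eval z) (hω₀ : ω.eval z₀ ≠ 0)
    (f : ℝ → ℝ)
    (hf : ∀ z ∈ Ioo z₀ z₁, f z = Real.sqrt ((z₁ - z) * (z - z₀)) * ω.eval z)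
    (A : ℝ → ℝ)
    (hA : ∀ z, A z = ∫ t in z₀..z, Real.sqrt (1 + deriv f t ^ 2)) :
    Tendsto (fun z => A z / Real.sqrt (z - z₀)) (nhdsWithin z₀ (Ioi z₀))
      (nhds (Real.sqrt (z₁ - z₀) * |ω.eval z₀|)) :=
  stmt7_general z₀ z₁ hz ω f hf A hA
end
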